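/- arXiv:1908.00428 — 5 statements merged into one kernel-verified Lean document; each statement's English description precedes it below -/
import Mathlib

section
/- For distinct nonzero complex numbers λ₁,…,λ_k with |λ_i| < 1 and λ_iλ_j ≠ 1 for all i,j, and for t with max|λ_i| < |t| < min|λ_i|^{-1}, the product ∏_{ℓ=1}^k (1/(1-tλ_ℓ) + (λ_ℓ/t)/(1-λ_ℓ/t)) admits the partial-fraction decomposition ∑_{j=1}^k (C_j/(1-tλ_j) + D_j/(t-λ_j)) for suitable constants C_j, D_j, where C_j = λ_j^{k-1} ∏_{ℓ≠j} (1-λ_ℓ²)/((λ_j-λ_ℓ)(1-λ_jλ_ℓ)). -/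
/-!
Each factor equals `(λ - λ⁻¹) t / ((t - λ) (t - λ⁻¹))`, so the product is `P(t) / N(t)` with
`P = ∏ (λ_ℓ - λ_ℓ⁻¹) X` of degree `k` and `N` the monic polynomial whose `2k` distinct roots are
the `λ_j` and the `λ_j⁻¹`. As `deg P < deg N`, the barycentric form of Lagrange interpolation at
these roots is the partial-fraction decomposition `P / N = ∑_x w_x P(x) / (t - x)`. The terms at
`x = λ_j` give `D_j / (t - λ_j)`; those at `x = λ_j⁻¹` become `C_j / (1 - t λ_j)` through
`t - λ_j⁻¹ = -λ_j⁻¹ (1 - t λ_j)`, and `C_j = -λ_j w_x P(λ_j⁻¹)` simplifies factor by factor to the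
stated product.
-/

open Polynomial Lagrange Finset

theorem Lagrange.eval_div_eval_nodal_eq_sum {F ι : Type*} [Field F] [DecidableEq ι]
    {s : Finset ι} {v : ι → F} (hvs : Set.InjOn v s) {P : F[X]} (hP : P.degree < #s) {x : F}
    (hx : ∀ i ∈ s, x ≠ v i) :
    P.eval x / (nodal s v).eval x = ∑ i ∈ s, nodalWeight s v i * P.eval (v i) / (x - v i) := by
  have hbary := eval_interpolate_not_at_node (fun i => P.eval (v i)) hx
  rw [← eq_interpolate hvs hP] at hbary
  rw [hbary, mul_div_cancel_left₀ _ (eval_nodal_not_at_node hx)]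
  exact sum_congr rfl fun i _ => by ring

variable {K ι : Type*} [Field K]

theorem one_div_add_div_div_eq {a t : K} (ha : a ≠ 0) (ht : t ≠ 0) (ht_ne : t ≠ a)
    (ht_mul : t * a ≠ 1) :
    1 / (1 - t * a) + a / t / (1 - a / t) = (a - a⁻¹) * t / ((t - a) * (t - a⁻¹)) := by
  have h1 : 1 - t * a ≠ 0 := sub_ne_zero.2 (Ne.symm ht_mul)
  have h2 : t - a ≠ 0 := sub_ne_zero.2 ht_ne
  have h3 : t - a⁻¹ ≠ 0 := by
    rw [sub_ne_zero]; rintro rfl; exact ht_mul (inv_mul_cancel₀ ha)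
  field_simp
  ring

def nodesAndInverses (lam : ι → K) : ι ⊕ ι → K := Sum.elim lam fun i => (lam i)⁻¹

@[simp]
theorem nodesAndInverses_inl (lam : ι → K) (i : ι) : nodesAndInverses lam (.inl i) = lam i := rfl

@[simp]
theorem nodesAndInverses_inr (lam : ι → K) (i : ι) :
    nodesAndInverses lam (.inr i) = (lam i)⁻¹ := rfl

theorem injective_nodesAndInverses {lam : ι → K} (hne : ∀ i, lam i ≠ 0)
    (hdist : Function.Injective lam) (hprod : ∀ i j, lam i * lam j ≠ 1) :
    Function.Injective (nodesAndInverses lam) := by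
  rintro (i | i) (j | j) h <;>
    simp only [nodesAndInverses_inl, nodesAndInverses_inr, inv_inj] at h
  · rw [hdist h]
  · exact absurd (by rw [h, inv_mul_cancel₀ (hne j)]) (hprod i j)
  · exact absurd (by rw [← h, inv_mul_cancel₀ (hne i)]) (hprod j i)
  · rw [hdist h]

variable [Fintype ι]

noncomputable def numeratorPoly (lam : ι → K) : K[X] := ∏ l, C (lam l - (lam l)⁻¹) * X

theorem degree_numeratorPoly_le (lam : ι → K) : (numeratorPoly lam).degree ≤ Fintype.card ι := by
  refine (degree_prod_le _ _).trans ?_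
  refine (sum_le_card_nsmul _ _ 1 fun l _ => degree_C_mul_X_le _).trans ?_
  simp

theorem prod_eq_eval_numeratorPoly_div_eval_nodal {lam : ι → K} (hne : ∀ i, lam i ≠ 0) {t : K}
    (ht : t ≠ 0) (ht_ne : ∀ i, t ≠ lam i) (ht_mul : ∀ i, t * lam i ≠ 1) :
    ∏ l, (1 / (1 - t * lam l) + lam l / t / (1 - lam l / t)) =
      (numeratorPoly lam).eval t / (nodal univ (nodesAndInverses lam)).eval t := by
  rw [numeratorPoly, eval_prod, eval_nodal, Fintype.prod_sum_type, ← prod_mul_distrib,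
    ← prod_div_distrib]
  refine prod_congr rfl fun l _ => ?_
  rw [one_div_add_div_div_eq (hne l) ht (ht_ne l) (ht_mul l)]
  simp

variable [DecidableEq ι]

theorem nodalWeight_nodesAndInverses_inr (lam : ι → K) (j : ι) :
    nodalWeight univ (nodesAndInverses lam) (.inr j) =
      ((∏ l, ((lam j)⁻¹ - lam l)) * ∏ l ∈ univ.erase j, ((lam j)⁻¹ - (lam l)⁻¹))⁻¹ := by
  have : univ.erase (Sum.inr j) = (univ : Finset ι).disjSum (univ.erase j) := by
    ext (l | l) <;> simp
  simp only [nodalWeight, this, prod_disjSum, nodesAndInverses_inl, nodesAndInverses_inr,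
    prod_inv_distrib]

noncomputable def residueCoeff (lam : ι → K) (j : ι) : K :=
  lam j ^ (Fintype.card ι - 1) *
    ∏ l ∈ univ.erase j, (1 - lam l ^ 2) / ((lam j - lam l) * (1 - lam j * lam l))

theorem neg_mul_nodalWeight_inr_mul_eval_numeratorPoly {lam : ι → K} (hne : ∀ i, lam i ≠ 0)
    (hdist : Function.Injective lam) (hprod : ∀ i j, lam i * lam j ≠ 1) (j : ι) :
    -lam j * (nodalWeight univ (nodesAndInverses lam) (.inr j) *
        (numeratorPoly lam).eval (lam j)⁻¹) = residueCoeff lam j := by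
  have ha := hne j
  have hsq : 1 - lam j ^ 2 ≠ 0 := by rw [sq, sub_ne_zero]; exact (hprod j j).symm
  calc -lam j * (nodalWeight univ (nodesAndInverses lam) (.inr j) *
          (numeratorPoly lam).eval (lam j)⁻¹)
      = (∏ l ∈ univ.erase j, (lam l - (lam l)⁻¹) * (lam j)⁻¹) /
          ((∏ l ∈ univ.erase j, ((lam j)⁻¹ - lam l)) *
            ∏ l ∈ univ.erase j, ((lam j)⁻¹ - (lam l)⁻¹)) := by
        -- the `l = j` factors contribute `(λ_j - λ_j⁻¹) λ_j⁻¹ / (λ_j⁻¹ - λ_j) = -λ_j⁻¹`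
        rw [nodalWeight_nodesAndInverses_inr, numeratorPoly, eval_prod,
          ← mul_prod_erase univ _ (mem_univ j), ← mul_prod_erase univ _ (mem_univ j)]
        simp only [eval_mul, eval_C, eval_X]
        rw [mul_assoc, mul_inv, div_eq_mul_inv]
        field_simp
        ring
    _ = ∏ l ∈ univ.erase j,
          lam j * ((1 - lam l ^ 2) / ((lam j - lam l) * (1 - lam j * lam l))) := by
        rw [← prod_mul_distrib, ← prod_div_distrib]
        refine prod_congr rfl fun l hl => ?_
        have hlj : l ≠ j := ne_of_mem_erase hl
        have hl0 := hne l
        have h1 : lam j - lam l ≠ 0 := sub_ne_zero.2 fun h => hlj (hdist h).symm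
        have h2 : 1 - lam j * lam l ≠ 0 := sub_ne_zero.2 (hprod j l).symm
        have e1 : (lam j)⁻¹ - lam l = (1 - lam j * lam l) / lam j := by field_simp
        have e2 : (lam j)⁻¹ - (lam l)⁻¹ = -(lam j - lam l) / (lam j * lam l) := by
          field_simp; ring
        rw [e1, e2]
        field_simp
        ring
    _ = residueCoeff lam j := by
        rw [prod_mul_distrib, prod_const, card_erase_of_mem (mem_univ j), card_univ, residueCoeff]

theorem div_sub_inv_eq_neg_mul_div_one_sub_mul {a t : K} (ha : a ≠ 0) (x : K) :
    x / (t - a⁻¹) = -a * x / (1 - t * a) := by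
  rw [show t - a⁻¹ = (1 - t * a) / -a by field_simp; ring, div_div_eq_mul_div, mul_comm]

theorem prod_eq_sum_residueCoeff_div_add [Nonempty ι] {lam : ι → K} (hne : ∀ i, lam i ≠ 0)
    (hdist : Function.Injective lam) (hprod : ∀ i j, lam i * lam j ≠ 1) {t : K} (ht : t ≠ 0)
    (ht_ne : ∀ i, t ≠ lam i) (ht_mul : ∀ i, t * lam i ≠ 1) :
    ∏ l, (1 / (1 - t * lam l) + lam l / t / (1 - lam l / t)) =
      ∑ j, (residueCoeff lam j / (1 - t * lam j) +
        nodalWeight univ (nodesAndInverses lam) (.inl j) * (numeratorPoly lam).eval (lam j) /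
          (t - lam j)) := by
  have hdeg : (numeratorPoly lam).degree < #(univ : Finset (ι ⊕ ι)) :=
    (degree_numeratorPoly_le lam).trans_lt <| by
      rw [card_univ, Fintype.card_sum]; exact_mod_cast Nat.lt_add_of_pos_left Fintype.card_pos
  have hnode : ∀ x ∈ (univ : Finset (ι ⊕ ι)), t ≠ nodesAndInverses lam x := by
    rintro (i | i) -
    · exact ht_ne i
    · rintro rfl; exact ht_mul i (inv_mul_cancel₀ (hne i))
  rw [prod_eq_eval_numeratorPoly_div_eval_nodal hne ht ht_ne ht_mul,
    eval_div_eval_nodal_eq_sum (injective_nodesAndInverses hne hdist hprod).injOn hdeg hnode,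
    Fintype.sum_sum_type, add_comm, ← sum_add_distrib]
  refine sum_congr rfl fun j _ => ?_
  rw [← neg_mul_nodalWeight_inr_mul_eval_numeratorPoly hne hdist hprod, nodesAndInverses_inl,
    nodesAndInverses_inr, div_sub_inv_eq_neg_mul_div_one_sub_mul (hne j)]

theorem stmt3_general (k : ℕ) (hk : 1 ≤ k) (lam : Fin k → ℂ)
    (hne : ∀ i, lam i ≠ 0)
    (hdist : Function.Injective lam)
    (hprod : ∀ i j, lam i * lam j ≠ 1) :
    ∃ C D : Fin k → ℂ,
      (∀ j, C j = lam j ^ (k - 1) *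
        ∏ l ∈ Finset.univ.erase j,
          (1 - lam l ^ 2) / ((lam j - lam l) * (1 - lam j * lam l))) ∧
      ∀ t : ℂ, t ≠ 0 → (∀ i, ‖lam i‖ < ‖t‖) → (∀ i, ‖t‖ * ‖lam i‖ < 1) →
        ∏ l, (1 / (1 - t * lam l) + (lam l / t) / (1 - lam l / t))
          = ∑ j, (C j / (1 - t * lam j) + D j / (t - lam j)) := by
  have : Nonempty (Fin k) := ⟨⟨0, hk⟩⟩
  refine ⟨residueCoeff lam,
    fun j => nodalWeight univ (nodesAndInverses lam) (.inl j) * (numeratorPoly lam).eval (lam j),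
    fun j => by rw [residueCoeff, Fintype.card_fin], fun t ht hlt hlt' => ?_⟩
  refine prod_eq_sum_residueCoeff_div_add hne hdist hprod ht (fun i h => ?_) (fun i h => ?_)
  · exact (hlt i).ne (by rw [h])
  · exact (hlt' i).ne' (by rw [← norm_mul, h, norm_one])

/-- Partial-fraction decomposition of the product
∏_ℓ (1/(1-tλ_ℓ) + (λ_ℓ/t)/(1-λ_ℓ/t)) on the annulus max|λ| < |t| < min|λ|⁻¹,
with the explicit residue coefficients C_j. -/
theorem stmt3 (k : ℕ) (hk : 1 ≤ k) (lam : Fin k → ℂ)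
    (hlam : ∀ i, ‖lam i‖ < 1) (hne : ∀ i, lam i ≠ 0)
    (hdist : Function.Injective lam)
    (hprod : ∀ i j, lam i * lam j ≠ 1) :
    ∃ C D : Fin k → ℂ,
      (∀ j, C j = lam j ^ (k - 1) *
        ∏ l ∈ Finset.univ.erase j,
          (1 - lam l ^ 2) / ((lam j - lam l) * (1 - lam j * lam l))) ∧
      ∀ t : ℂ, t ≠ 0 → (∀ i, ‖lam i‖ < ‖t‖) → (∀ i, ‖t‖ * ‖lam i‖ < 1) →
        ∏ l, (1 / (1 - t * lam l) + (lam l / t) / (1 - lam l / t))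
          = ∑ j, (C j / (1 - t * lam j) + D j / (t - lam j)) :=
  stmt3_general k hk lam hne hdist hprod
end

section
/- For pairwise distinct complex numbers λ₁,…,λ_k with 0 < |λ_i| < 1 and any nonnegative integer S, the sum ∑_{m₁+⋯+m_k=S} λ₁^{|m₁|}⋯λ_k^{|m_k|} over integer tuples equals ∑_{j=1}^k λ_j^{S+k-1} ∏_{ℓ≠j} (1-λ_ℓ²)/((λ_j-λ_ℓ)(1-λ_jλ_ℓ)). -/
/-!
Write `G(T)` for the sum over integer tuples with coordinate sum `T`, now for every `T : ℤ`.
Splitting off the last coordinate gives `G_{k+1}(T) = ∑ₘ Λ^|m| G_k(T - m)`, and the two-sided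
geometric convolution is `∑ₘ b^|m| a^|T-m| = a^|T| K(a,b) + b^|T| K(b,a)` with
`K(a,b) = a(1 - b²)/((a - b)(1 - ab))`. Hence by induction `G(T) = ∑ⱼ λⱼ^|T| ∏_{l≠j} K(λⱼ,λₗ)`:
the terms carrying `Λ^|T|` collect into the new coefficient `∏ⱼ K(Λ,λⱼ)`. That last identity is
partial fractions in disguise: in the variable `z + z⁻¹` the kernel `K(a,b)` is a simple pole,
and the identity becomes Lagrange interpolation of the constant `1`.
-/
open Finset

section PartialFractions

variable {F ι : Type*} [Field F] [DecidableEq ι] {s : Finset ι} {v : ι → F} {x : F}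

theorem Lagrange.sum_nodalWeight_mul_inv_sub (hvs : Set.InjOn v s) (hs : s.Nonempty)
    (hx : ∀ i ∈ s, x ≠ v i) :
    ∑ i ∈ s, Lagrange.nodalWeight s v i * (x - v i)⁻¹ = (∏ i ∈ s, (x - v i))⁻¹ := by
  have h := Lagrange.eval_interpolate_not_at_node 1 hx
  simp only [Lagrange.interpolate_one hvs hs, Polynomial.eval_one, Pi.one_apply, mul_one,
    Lagrange.eval_nodal] at h
  exact eq_inv_of_mul_eq_one_right h.symm

theorem sum_prod_erase_div_mul_div (hvs : Set.InjOn v s) (hs : s.Nonempty)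
    (hx : ∀ i ∈ s, x ≠ v i) (u : ι → F) :
    ∑ j ∈ s, (∏ l ∈ s.erase j, u l / (v j - v l)) * (u j / (x - v j)) =
      ∏ j ∈ s, u j / (x - v j) := by
  have hterm : ∀ j ∈ s, (∏ l ∈ s.erase j, u l / (v j - v l)) * (u j / (x - v j)) =
      (∏ l ∈ s, u l) * (Lagrange.nodalWeight s v j * (x - v j)⁻¹) := by
    intro j hj
    rw [← mul_prod_erase s u hj, Lagrange.nodalWeight]
    simp only [div_eq_mul_inv, prod_mul_distrib]
    ring
  rw [sum_congr rfl hterm, ← mul_sum, Lagrange.sum_nodalWeight_mul_inv_sub hvs hs hx,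
    prod_div_distrib, div_eq_mul_inv]

end PartialFractions

theorem Finset.prod_erase_eq_prod_update {M ι : Type*} [CommMonoid M] [DecidableEq ι]
    {s : Finset ι} {a : ι} (h : a ∈ s) (f : ι → M) :
    ∏ x ∈ s.erase a, f x = ∏ x ∈ s, Function.update f a 1 x := by
  rw [prod_update_of_mem h, one_mul, sdiff_singleton_eq_erase]

theorem Fin.prod_univ_erase_last {M : Type*} [CommMonoid M] {k : ℕ} (f : Fin (k + 1) → M) :
    ∏ l ∈ univ.erase (Fin.last k), f l = ∏ i : Fin k, f i.castSucc := by
  rw [prod_erase_eq_prod_update (mem_univ _), Fin.prod_univ_castSucc]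
  simp [(Fin.castSucc_lt_last _).ne]

theorem Fin.prod_univ_erase_castSucc {M : Type*} [CommMonoid M] {k : ℕ} (f : Fin (k + 1) → M)
    (j : Fin k) :
    ∏ l ∈ univ.erase j.castSucc, f l = (∏ l ∈ univ.erase j, f l.castSucc) * f (Fin.last k) := by
  rw [prod_erase_eq_prod_update (mem_univ _), prod_erase_eq_prod_update (mem_univ _),
    Fin.prod_univ_castSucc]
  simp [Function.update_apply, (Fin.castSucc_lt_last j).ne']

section Kernel

variable {K : Type*} [Field K]

def convKernel (a b : K) : K := a * (1 - b ^ 2) / ((a - b) * (1 - a * b))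

theorem sub_mul_one_sub_mul_eq {a b : K} (ha : a ≠ 0) (hb : b ≠ 0) :
    (a - b) * (1 - a * b) = -(a * b) * (a + a⁻¹ - (b + b⁻¹)) := by
  field_simp
  ring

theorem convKernel_eq_div {a b : K} (ha : a ≠ 0) (hb : b ≠ 0) :
    convKernel a b = (b - b⁻¹) / (a + a⁻¹ - (b + b⁻¹)) := by
  have hnum : a * (1 - b ^ 2) = -(a * b) * (b - b⁻¹) := by field_simp; ring
  rw [convKernel, hnum, sub_mul_one_sub_mul_eq ha hb,
    mul_div_mul_left _ _ (neg_ne_zero.2 (mul_ne_zero ha hb))]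

variable {ι : Type*} [Fintype ι] [DecidableEq ι]

def convWeight (μ : ι → K) (j : ι) : K := ∏ l ∈ univ.erase j, convKernel (μ j) (μ l)

theorem convWeight_eq (μ : ι → K) (j : ι) :
    convWeight μ j = μ j ^ (Fintype.card ι - 1) *
      ∏ l ∈ univ.erase j, (1 - μ l ^ 2) / ((μ j - μ l) * (1 - μ j * μ l)) := by
  simp only [convWeight, convKernel, mul_div_assoc, prod_mul_distrib, prod_const,
    card_erase_of_mem (mem_univ j), card_univ]

theorem sum_convWeight_mul_convKernel [Nonempty ι] {μ : ι → K} (hμ : ∀ i, μ i ≠ 0)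
    (hinj : Function.Injective fun i => μ i + (μ i)⁻¹) {x : K} (hx0 : x ≠ 0)
    (hx : ∀ i, x + x⁻¹ ≠ μ i + (μ i)⁻¹) :
    ∑ j, convWeight μ j * convKernel x (μ j) = ∏ j, convKernel x (μ j) := by
  simp only [convWeight, convKernel_eq_div (hμ _) (hμ _), convKernel_eq_div hx0 (hμ _)]
  exact sum_prod_erase_div_mul_div hinj.injOn univ_nonempty (fun i _ => hx i) _

theorem convWeight_castSucc {k : ℕ} (μ : Fin (k + 1) → K) (j : Fin k) :
    convWeight μ j.castSucc =
      convWeight (fun i : Fin k => μ i.castSucc) j * convKernel (μ j.castSucc) (μ (Fin.last k)) :=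
  Fin.prod_univ_erase_castSucc _ j

theorem convWeight_last {k : ℕ} (μ : Fin (k + 1) → K) :
    convWeight μ (Fin.last k) = ∏ j : Fin k, convKernel (μ (Fin.last k)) (μ j.castSucc) :=
  Fin.prod_univ_erase_last _

end Kernel

section Convolution

variable {𝕜 : Type*} [NormedField 𝕜]

theorem norm_mul_lt_one {a b : 𝕜} (ha : ‖a‖ < 1) (hb : ‖b‖ < 1) : ‖a * b‖ < 1 := by
  rw [norm_mul]
  exact mul_lt_one_of_nonneg_of_lt_one_left (norm_nonneg a) ha hb.le

theorem one_sub_mul_ne_zero_of_norm_lt_one {a b : 𝕜} (ha : ‖a‖ < 1) (hb : ‖b‖ < 1) :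
    1 - a * b ≠ 0 := by
  rw [sub_ne_zero]
  intro h
  simpa [← h] using norm_mul_lt_one ha hb

theorem eq_of_add_inv_eq_of_norm_lt_one {a b : 𝕜} (ha : ‖a‖ < 1) (hb : ‖b‖ < 1) (ha0 : a ≠ 0)
    (hb0 : b ≠ 0) (h : a + a⁻¹ = b + b⁻¹) : a = b := by
  have hprod : (a - b) * (1 - a * b) = 0 := by
    rw [sub_mul_one_sub_mul_eq ha0 hb0, h, sub_self, mul_zero]
  exact sub_eq_zero.mp ((mul_eq_zero.mp hprod).resolve_right
    (one_sub_mul_ne_zero_of_norm_lt_one ha hb))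

theorem hasSum_pow_natAbs_mul_pow_natAbs_natCast_sub {a b : 𝕜} (ha : ‖a‖ < 1) (hb : ‖b‖ < 1)
    (hab : a ≠ b) (T : ℕ) :
    HasSum (fun m : ℤ => b ^ m.natAbs * a ^ ((T : ℤ) - m).natAbs)
      (a ^ T * convKernel a b + b ^ T * convKernel b a) := by
  set f : ℤ → 𝕜 := fun m => b ^ m.natAbs * a ^ ((T : ℤ) - m).natAbs
  have hab1 : 1 - a * b ≠ 0 := one_sub_mul_ne_zero_of_norm_lt_one ha hb
  have hgeom : HasSum (fun n : ℕ => (a * b) ^ n) (1 - a * b)⁻¹ :=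
    hasSum_geometric_of_norm_lt_one (norm_mul_lt_one ha hb)
  have hupper : HasSum (fun n : ℕ => f (n + (T + 1) : ℕ)) (b ^ (T + 1) * a * (1 - a * b)⁻¹) := by
    refine (hgeom.mul_left (b ^ (T + 1) * a)).congr_fun fun n => ?_
    have h1 : ((n + (T + 1) : ℕ) : ℤ).natAbs = n + (T + 1) := by omega
    have h2 : ((T : ℤ) - ((n + (T + 1) : ℕ) : ℤ)).natAbs = n + 1 := by omega
    simp only [f, h1, h2]
    ring
  have hmiddle : ∑ i ∈ range (T + 1), f i = (b ^ (T + 1) - a ^ (T + 1)) / (b - a) := by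
    rw [eq_div_iff (sub_ne_zero.mpr hab.symm), ← geom_sum₂_mul]
    refine congrArg (· * _) (sum_congr rfl fun i hi => ?_)
    have hi : i < T + 1 := mem_range.mp hi
    have h2 : ((T : ℤ) - i).natAbs = T + 1 - 1 - i := by omega
    simp only [f, Int.natAbs_natCast, h2]
  have hnonneg : HasSum (fun n : ℕ => f n)
      (b ^ (T + 1) * a * (1 - a * b)⁻¹ + (b ^ (T + 1) - a ^ (T + 1)) / (b - a)) := by
    rw [← hmiddle]
    exact (hasSum_nat_add_iff (f := fun n : ℕ => f n) (T + 1)).mp hupper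
  have hneg : HasSum (fun n : ℕ => f (-(n + 1))) (b * a ^ (T + 1) * (1 - a * b)⁻¹) := by
    refine (hgeom.mul_left (b * a ^ (T + 1))).congr_fun fun n => ?_
    have h1 : (-(n + 1 : ℤ)).natAbs = n + 1 := by omega
    have h2 : ((T : ℤ) - -(n + 1 : ℤ)).natAbs = T + n + 1 := by omega
    simp only [f, h1, h2]
    ring
  convert hnonneg.of_nat_of_neg_add_one hneg using 1
  have hab' : a - b ≠ 0 := sub_ne_zero.mpr hab
  have hba : b - a ≠ 0 := sub_ne_zero.mpr hab.symm
  simp only [convKernel]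
  field_simp
  ring

theorem hasSum_pow_natAbs_mul_pow_natAbs_sub {a b : 𝕜} (ha : ‖a‖ < 1) (hb : ‖b‖ < 1)
    (hab : a ≠ b) (T : ℤ) :
    HasSum (fun m : ℤ => b ^ m.natAbs * a ^ (T - m).natAbs)
      (a ^ T.natAbs * convKernel a b + b ^ T.natAbs * convKernel b a) := by
  obtain ⟨n, rfl | rfl⟩ := Int.eq_nat_or_neg T
  · exact hasSum_pow_natAbs_mul_pow_natAbs_natCast_sub ha hb hab n
  · rw [← (Equiv.neg ℤ).hasSum_iff, Int.natAbs_neg, Int.natAbs_natCast]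
    convert hasSum_pow_natAbs_mul_pow_natAbs_natCast_sub ha hb hab n using 2 with m
    simp only [Function.comp_apply, Equiv.neg_apply, Int.natAbs_neg]
    congr 2
    omega

theorem summable_norm_pow_natAbs {a : 𝕜} (ha : ‖a‖ < 1) :
    Summable fun m : ℤ => ‖a ^ m.natAbs‖ := by
  have h := summable_geometric_of_lt_one (norm_nonneg a) ha
  exact .of_nat_of_neg (by simpa [norm_pow] using h) (by simpa [norm_pow] using h)

end Convolution

theorem summable_norm_prod_fin {R α : Type*} [NormedCommRing R] [NormOneClass R] :
    ∀ {n : ℕ} (f : Fin n → α → R), (∀ i, Summable fun a => ‖f i a‖) →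
      Summable fun x : Fin n → α => ‖∏ i, f i (x i)‖
  | 0, _, _ => .of_finite
  | n + 1, f, hf => by
    rw [← (Fin.consEquiv fun _ => α).summable_iff]
    refine ((hf 0).mul_norm (summable_norm_prod_fin (fun i => f i.succ) fun i => hf i.succ)).congr
      fun p => ?_
    simp [Fin.prod_univ_succ]

def Fin.sumSnocEquiv (G : Type*) [AddCommGroup G] (k : ℕ) (T : G) :
    {x : Fin (k + 1) → G // ∑ i, x i = T} ≃ Σ m : G, {y : Fin k → G // ∑ i, y i = T - m} where
  toFun x := ⟨x.1 (Fin.last k), Fin.init x.1, by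
    rw [eq_sub_iff_add_eq]; exact (Fin.sum_univ_castSucc x.1).symm.trans x.2⟩
  invFun p := ⟨Fin.snoc p.2.1 p.1, by simp [Fin.sum_univ_castSucc, p.2.2]⟩
  left_inv x := Subtype.ext (Fin.snoc_init_self x.1)
  right_inv p := Sigma.subtype_ext (Fin.snoc_last (α := fun _ => G) _ _)
    (Fin.init_snoc (α := fun _ => G) _ _)

theorem tsum_subtype_sum_eq_tsum_snoc {E G : Type*} [NormedAddCommGroup E] [CompleteSpace E]
    [AddCommGroup G] {k : ℕ} {f : (Fin (k + 1) → G) → E} (hf : Summable f) (T : G) :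
    ∑' x : {x : Fin (k + 1) → G // ∑ i, x i = T}, f x =
      ∑' (m : G) (y : {y : Fin k → G // ∑ i, y i = T - m}), f (Fin.snoc y.1 m) := by
  have hsigma : Summable fun p => f ((Fin.sumSnocEquiv G k T).symm p).1 :=
    (Fin.sumSnocEquiv G k T).symm.summable_iff.mpr (hf.subtype _)
  rw [← (Fin.sumSnocEquiv G k T).symm.tsum_eq]
  exact hsigma.tsum_sigma' fun m => hsigma.sigma_factor m

theorem tsum_subtype_sum_eq_fin_one {M G : Type*} [AddCommMonoid M] [TopologicalSpace M]
    [T2Space M] [AddCommGroup G] (f : (Fin 1 → G) → M) (T : G) :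
    ∑' x : {x : Fin 1 → G // ∑ i, x i = T}, f x = f fun _ => T := by
  let : Unique {x : Fin 1 → G // ∑ i, x i = T} :=
    { default := ⟨fun _ => T, by simp⟩
      uniq := fun x => Subtype.ext (funext fun i => by
        simpa [Fin.fin_one_eq_zero i] using x.2) }
  exact (hasSum_unique fun x : {x : Fin 1 → G // ∑ i, x i = T} => f x).tsum_eq

variable {𝕜 : Type*} [NormedField 𝕜] [CompleteSpace 𝕜]

theorem tsum_prod_pow_natAbs_snoc {k : ℕ} {μ : Fin (k + 1) → 𝕜} (hμ : ∀ i, ‖μ i‖ < 1) (T : ℤ) :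
    ∑' x : {x : Fin (k + 1) → ℤ // ∑ i, x i = T}, ∏ i, μ i ^ (x.1 i).natAbs =
      ∑' m : ℤ, μ (Fin.last k) ^ m.natAbs *
        ∑' y : {y : Fin k → ℤ // ∑ i, y i = T - m}, ∏ i, μ i.castSucc ^ (y.1 i).natAbs := by
  have hsummable : Summable fun x : Fin (k + 1) → ℤ => ∏ i, μ i ^ (x i).natAbs :=
    (summable_norm_prod_fin (fun i (m : ℤ) => μ i ^ m.natAbs) fun i =>
      summable_norm_pow_natAbs (hμ i)).of_norm
  rw [tsum_subtype_sum_eq_tsum_snoc hsummable]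
  refine tsum_congr fun m => ?_
  simp only [Fin.prod_univ_castSucc, Fin.snoc_castSucc, Fin.snoc_last]
  rw [tsum_mul_right, mul_comm]

theorem tsum_prod_pow_natAbs_of_sum_eq {k : ℕ} (hk : 1 ≤ k) {μ : Fin k → 𝕜}
    (hμ : ∀ i, ‖μ i‖ < 1) (hμ0 : ∀ i, μ i ≠ 0) (hinj : Function.Injective μ) (T : ℤ) :
    ∑' x : {x : Fin k → ℤ // ∑ i, x i = T}, ∏ i, μ i ^ (x.1 i).natAbs =
      ∑ j, μ j ^ T.natAbs * convWeight μ j := by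
  induction k, hk using Nat.le_induction generalizing T with
  | base =>
    refine (tsum_subtype_sum_eq_fin_one (fun x => ∏ i, μ i ^ (x i).natAbs) T).trans ?_
    simp [convWeight]
  | succ k hk ih =>
    have : Nonempty (Fin k) := ⟨⟨0, hk⟩⟩
    set Λ := μ (Fin.last k)
    have hinit := ih (μ := fun i : Fin k => μ i.castSucc) (fun i => hμ _) (fun i => hμ0 _)
      (hinj.comp (Fin.castSucc_injective k))
    have hconv (j : Fin k) :=
      hasSum_pow_natAbs_mul_pow_natAbs_sub (hμ j.castSucc) (hμ (Fin.last k))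
        (hinj.ne (Fin.castSucc_lt_last j).ne) T
    have hinj_add_inv : ∀ i j, μ i + (μ i)⁻¹ = μ j + (μ j)⁻¹ → i = j := fun i j h =>
      hinj (eq_of_add_inv_eq_of_norm_lt_one (hμ i) (hμ j) (hμ0 i) (hμ0 j) h)
    calc ∑' x : {x : Fin (k + 1) → ℤ // ∑ i, x i = T}, ∏ i, μ i ^ (x.1 i).natAbs
        = ∑ j : Fin k, convWeight (fun i : Fin k => μ i.castSucc) j *
            ∑' m : ℤ, Λ ^ m.natAbs * μ j.castSucc ^ (T - m).natAbs := by
          simp only [tsum_prod_pow_natAbs_snoc hμ, hinit, mul_sum]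
          rw [Summable.tsum_finsetSum fun j _ =>
            ((hconv j).summable.mul_right (convWeight (fun i : Fin k => μ i.castSucc) j)).congr
              fun m => by ring]
          refine sum_congr rfl fun j _ => ?_
          rw [← tsum_mul_left]
          exact tsum_congr fun m => by ring
      _ = ∑ j : Fin k, (μ j.castSucc ^ T.natAbs * convWeight μ j.castSucc +
            Λ ^ T.natAbs * (convWeight (fun i : Fin k => μ i.castSucc) j *
              convKernel Λ (μ j.castSucc))) := by
          refine sum_congr rfl fun j _ => ?_
          rw [(hconv j).tsum_eq, convWeight_castSucc]
          ring
      _ = ∑ j, μ j ^ T.natAbs * convWeight μ j := by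
          rw [sum_add_distrib, ← mul_sum, sum_convWeight_mul_convKernel (fun i => hμ0 _)
            (fun i j h => Fin.castSucc_injective k (hinj_add_inv _ _ h)) (hμ0 _)
            (fun i h => (Fin.castSucc_lt_last i).ne' (hinj_add_inv _ _ h)), ← convWeight_last,
            Fin.sum_univ_castSucc]

/-- For pairwise distinct λ's with 0 < |λ_i| < 1 and S ≥ 0,
∑_{m₁+⋯+m_k=S} ∏ λ_i^{|m_i|} = ∑_j λ_j^{S+k-1} ∏_{ℓ≠j} (1-λ_ℓ²)/((λ_j-λ_ℓ)(1-λ_jλ_ℓ)). -/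
theorem stmt5 (k : ℕ) (hk : 1 ≤ k) (lam : Fin k → ℂ)
    (hlam : ∀ i, ‖lam i‖ < 1) (hne : ∀ i, lam i ≠ 0)
    (hdist : Function.Injective lam) (S : ℕ) :
    ∑' m : {f : Fin k → ℤ // ∑ i, f i = (S : ℤ)},
        ∏ i, lam i ^ ((m : Fin k → ℤ) i).natAbs
      = ∑ j, lam j ^ (S + k - 1) *
          ∏ l ∈ Finset.univ.erase j,
            (1 - lam l ^ 2) / ((lam j - lam l) * (1 - lam j * lam l)) := by
  rw [tsum_prod_pow_natAbs_of_sum_eq hk hlam hne hdist, Int.natAbs_natCast]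
  refine sum_congr rfl fun j _ => ?_
  rw [convWeight_eq, Fintype.card_fin, ← mul_assoc, ← pow_add, Nat.add_sub_assoc hk]
end

section
/- Let λ₁,…,λ_k be real numbers with |λ_i| < 1 and s₁,…,s_k integers, and set S = |s₁+⋯+s_k|. Then the limit as n → ∞ of (1/n)∑_{i₁,…,i_k=1}^n λ₁^{|i₁-i₂-s₁|} λ₂^{|i₂-i₃-s₂|} ⋯ λ_k^{|i_k-i₁-s_k|} exists and equals B_S = ∑_{m₁+⋯+m_k=S} λ₁^{|m₁|}⋯λ_k^{|m_k|}. -/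
open Filter Finset Topology

/-!
Substituting `m_p = i_p - i_{p+1} - s_p` turns the `k`-fold sum into `∑_m N_n(m) ∏ λ_p^{|m_p|}`,
where `N_n(m)` counts the `i ∈ [1, n]^k` with cyclic differences `m + s`. Cyclic differences sum
to zero, so `N_n(m) = 0` unless `∑ m = -∑ s`; in that case the solutions `i` form one translate
of the diagonal `ℤ·(1, …, 1)`, and cutting it with the cube gives `n - C(m) ≤ N_n(m) ≤ n`.
Thus `N_n(m)/n` tends to the indicator of that level set, boundedly by `1`, and dominated
convergence against the absolutely summable weights gives `B_{-∑ s}`, which equals `B_S`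
because `m ↦ -m` preserves the weights.
-/

theorem summable_pow_natAbs {r : ℝ} (hr : |r| < 1) : Summable fun z : ℤ => r ^ z.natAbs :=
  .of_nat_of_neg (by simpa using summable_geometric_of_abs_lt_one hr)
    (by simpa using summable_geometric_of_abs_lt_one hr)

theorem summable_pi_prod_of_nonneg {ι κ : Type*} [Fintype ι] {f : ι → κ → ℝ}
    (hf₀ : ∀ p z, 0 ≤ f p z) (hf : ∀ p, Summable (f p)) :
    Summable fun m : ι → κ => ∏ p, f p (m p) := by
  classical
  refine summable_of_sum_le (c := ∏ p, ∑' z, f p z)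
    (fun m => prod_nonneg fun p _ => hf₀ p _) fun u => ?_
  calc ∑ m ∈ u, ∏ p, f p (m p)
      ≤ ∑ m ∈ Fintype.piFinset fun p => u.image (· p), ∏ p, f p (m p) :=
        sum_le_sum_of_subset_of_nonneg
          (fun m hm => Fintype.mem_piFinset.2 fun p => mem_image_of_mem _ hm)
          fun m _ _ => prod_nonneg fun p _ => hf₀ p _
    _ = ∏ p, ∑ z ∈ u.image (· p), f p z := (prod_univ_sum _ _).symm
    _ ≤ ∏ p, ∑' z, f p z :=
        prod_le_prod (fun p _ => sum_nonneg fun z _ => hf₀ p z)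
          fun p _ => (hf p).sum_le_tsum _ fun z _ => hf₀ p z

theorem summable_prod_pow_natAbs {ι : Type*} [Fintype ι] {r : ι → ℝ} (hr : ∀ p, |r p| < 1) :
    Summable fun m : ι → ℤ => ∏ p, r p ^ (m p).natAbs :=
  (summable_pi_prod_of_nonneg (fun p z => by positivity)
    fun p => summable_pow_natAbs (abs_abs (r p) ▸ hr p)).of_norm_bounded
    fun m => by simp [norm_prod]

theorem sum_comp_eq_tsum_card_fiber_smul {ι κ M : Type*} [AddCommMonoid M] [TopologicalSpace M]
    [DecidableEq κ] (s : Finset ι) (g : ι → κ) (F : κ → M) :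
    ∑ i ∈ s, F (g i) = ∑' b, #{i ∈ s | g i = b} • F b := by
  rw [sum_comp, tsum_eq_sum]
  intro b hb
  have hempty : {i ∈ s | g i = b} = ∅ :=
    filter_eq_empty_iff.2 fun i hi (hgi : g i = b) => hb (hgi ▸ mem_image_of_mem g hi)
  rw [hempty, card_empty, zero_smul]

def cyclicDiff {k : ℕ} (i : Fin k → ℤ) (p : Fin k) : ℤ := i p - i (finRotate k p)

theorem sum_cyclicDiff {k : ℕ} (i : Fin k → ℤ) : ∑ p, cyclicDiff i p = 0 := by
  simp only [cyclicDiff, sum_sub_distrib, Equiv.sum_comp (finRotate k) i, sub_self]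

theorem cyclicDiff_castSucc {K : ℕ} (i : Fin (K + 1) → ℤ) (q : Fin K) :
    cyclicDiff i q.castSucc = i q.castSucc - i q.succ := by
  rw [cyclicDiff, finRotate_apply, Fin.coeSucc_eq_succ]

theorem eq_add_sub_of_cyclicDiff_eq {K : ℕ} {i j : Fin (K + 1) → ℤ}
    (h : cyclicDiff i = cyclicDiff j) (p : Fin (K + 1)) : i p = j p + (i 0 - j 0) := by
  induction p using Fin.induction with
  | zero => ring
  | succ q ih =>
    have hq := congrFun h q.castSucc
    rw [cyclicDiff_castSucc, cyclicDiff_castSucc] at hq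
    linarith

theorem exists_cyclicDiff_eq {K : ℕ} {d : Fin (K + 1) → ℤ} (hd : ∑ p, d p = 0) :
    ∃ i, cyclicDiff i = d := by
  refine ⟨fun p => -Fin.partialSum d p.castSucc, funext fun p => ?_⟩
  rcases Fin.eq_castSucc_or_eq_last p with ⟨q, rfl⟩ | rfl
  · rw [cyclicDiff_castSucc, ← Fin.succ_castSucc, Fin.partialSum_succ]
    ring
  · have htotal : Fin.partialSum d (Fin.last (K + 1)) = ∑ p, d p := by
      rw [Fin.partialSum, Fin.val_last, List.take_of_length_le (by simp), List.sum_ofFn]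
    rw [← Fin.succ_last, Fin.partialSum_succ, hd] at htotal
    simp only [cyclicDiff, finRotate_last, Fin.castSucc_zero, Fin.partialSum_zero]
    linarith

noncomputable def cube (k n : ℕ) : Finset (Fin k → ℤ) := Fintype.piFinset fun _ => Icc 1 (n : ℤ)

theorem card_filter_cyclicDiff_eq_le {K : ℕ} (n : ℕ) (d : Fin (K + 1) → ℤ) :
    #{i ∈ cube (K + 1) n | cyclicDiff i = d} ≤ n := by
  calc #{i ∈ cube (K + 1) n | cyclicDiff i = d}
      ≤ #(Icc (1 : ℤ) n) := by
        refine card_le_card_of_injOn (· 0) (fun i hi => ?_) fun i hi j hj hij => funext fun p => ?_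
        · exact Fintype.mem_piFinset.1 (mem_filter.1 hi).1 0
        · rw [eq_add_sub_of_cyclicDiff_eq ((mem_filter.1 hi).2.trans (mem_filter.1 hj).2.symm) p,
            show i 0 = j 0 from hij, sub_self, add_zero]
    _ = n := by simp

theorem exists_le_card_filter_cyclicDiff_eq_add {K : ℕ} {d : Fin (K + 1) → ℤ}
    (hd : ∑ p, d p = 0) : ∃ C : ℕ, ∀ n : ℕ, n ≤ #{i ∈ cube (K + 1) n | cyclicDiff i = d} + C := by
  obtain ⟨i₀, hi₀⟩ := exists_cyclicDiff_eq hd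
  set W : ℕ := ∑ p, (i₀ p).natAbs
  have hW : ∀ p, |i₀ p| ≤ W := fun p => by
    rw [Int.abs_eq_natAbs]
    exact_mod_cast single_le_sum (fun q _ => Nat.zero_le (i₀ q).natAbs) (mem_univ p)
  refine ⟨2 * W, fun n => ?_⟩
  have hle : #(Icc (1 + W : ℤ) (n - W)) ≤ #{i ∈ cube (K + 1) n | cyclicDiff i = d} := by
    refine card_le_card_of_injOn (fun c p => i₀ p + c) (fun c hc => ?_)
      fun c _ c' _ h => add_left_cancel (congrFun h 0)
    obtain ⟨hc₁, hc₂⟩ := mem_Icc.1 hc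
    refine mem_filter.2 ⟨Fintype.mem_piFinset.2 fun p => ?_, ?_⟩
    · have := abs_le.1 (hW p)
      exact mem_Icc.2 ⟨by linarith, by linarith⟩
    · rw [← hi₀]
      funext p
      simp only [cyclicDiff]
      ring
  rw [Int.card_Icc] at hle
  omega

theorem tendsto_card_filter_cyclicDiff_eq_div {K : ℕ} {d : Fin (K + 1) → ℤ} (hd : ∑ p, d p = 0) :
    Tendsto (fun n : ℕ => (#{i ∈ cube (K + 1) n | cyclicDiff i = d} : ℝ) / n) atTop (𝓝 1) := by
  obtain ⟨C, hC⟩ := exists_le_card_filter_cyclicDiff_eq_add hd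
  have hlower : Tendsto (fun n : ℕ => 1 - (C : ℝ) / n) atTop (𝓝 1) := by
    simpa using tendsto_const_nhds.sub (tendsto_const_div_atTop_nhds_zero_nat (C : ℝ))
  refine tendsto_of_tendsto_of_tendsto_of_le_of_le' hlower tendsto_const_nhds ?_ ?_
  · filter_upwards [eventually_gt_atTop 0] with n hn
    have : (n : ℝ) ≤ #{i ∈ cube (K + 1) n | cyclicDiff i = d} + C := by exact_mod_cast hC n
    rw [one_sub_div (by positivity), div_le_div_iff_of_pos_right (by positivity)]
    linarith
  · filter_upwards [eventually_gt_atTop 0] with n hn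
    rw [div_le_one (by positivity)]
    exact_mod_cast card_filter_cyclicDiff_eq_le n d

theorem tendsto_average_sum_comp_cyclicDiff {K : ℕ} {F : (Fin (K + 1) → ℤ) → ℝ}
    (hF : Summable F) :
    Tendsto (fun n : ℕ => (1 / (n : ℝ)) * ∑ i ∈ cube (K + 1) n, F (cyclicDiff i)) atTop
      (𝓝 (∑' d : {d : Fin (K + 1) → ℤ // ∑ p, d p = 0}, F d)) := by
  classical
  set N : ℕ → (Fin (K + 1) → ℤ) → ℕ := fun n d => #{i ∈ cube (K + 1) n | cyclicDiff i = d}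
  have hsum (n : ℕ) : (1 / (n : ℝ)) * ∑ i ∈ cube (K + 1) n, F (cyclicDiff i)
      = ∑' d, (N n d : ℝ) / n * F d := by
    rw [sum_comp_eq_tsum_card_fiber_smul, ← tsum_mul_left]
    congr 1 with d
    rw [nsmul_eq_mul]
    ring
  simp only [hsum]
  rw [show (∑' d : {d : Fin (K + 1) → ℤ // ∑ p, d p = 0}, F d)
      = ∑' d, {d : Fin (K + 1) → ℤ | ∑ p, d p = 0}.indicator F d from tsum_subtype _ F]
  refine tendsto_tsum_of_dominated_convergence hF.abs (fun d => ?_) ?_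
  · by_cases hd : ∑ p, d p = 0
    · simpa [hd] using (tendsto_card_filter_cyclicDiff_eq_div hd).mul_const (F d)
    · have hN (n : ℕ) : N n d = 0 :=
        card_eq_zero.2 (filter_eq_empty_iff.2 fun i _ h => hd (h ▸ sum_cyclicDiff i))
      simp [hN, hd]
  · filter_upwards [eventually_gt_atTop 0] with n hn d
    have hNn : (N n d : ℝ) / n ≤ 1 := by
      rw [div_le_one (by positivity)]
      exact_mod_cast card_filter_cyclicDiff_eq_le n d
    rw [norm_mul, Real.norm_of_nonneg (by positivity), Real.norm_eq_abs]
    exact mul_le_of_le_one_left (abs_nonneg _) hNn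

/-- The constant `B_t` of the paper. -/
noncomputable def levelSum {ι : Type*} [Fintype ι] (lam : ι → ℝ) (t : ℤ) : ℝ :=
  ∑' m : {f : ι → ℤ // ∑ i, f i = t}, ∏ i, lam i ^ (m.1 i).natAbs

theorem levelSum_neg {ι : Type*} [Fintype ι] (lam : ι → ℝ) (t : ℤ) :
    levelSum lam (-t) = levelSum lam t := by
  let e : {f : ι → ℤ // ∑ i, f i = t} ≃ {f : ι → ℤ // ∑ i, f i = -t} :=
    (Equiv.neg _).subtypeEquiv fun f => by simp [neg_eq_iff_eq_neg]
  rw [levelSum, ← e.tsum_eq]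
  simp [e, levelSum]

theorem levelSum_abs {ι : Type*} [Fintype ι] (lam : ι → ℝ) (t : ℤ) :
    levelSum lam |t| = levelSum lam t := by
  rcases abs_choice t with h | h <;> rw [h]
  exact levelSum_neg lam t

theorem tsum_prod_pow_natAbs_sub_eq_levelSum {ι : Type*} [Fintype ι] (lam : ι → ℝ) (s : ι → ℤ) :
    ∑' d : {d : ι → ℤ // ∑ p, d p = 0}, ∏ p, lam p ^ (d.1 p - s p).natAbs
      = levelSum lam (-∑ p, s p) :=
  ((Equiv.subRight s).subtypeEquiv fun d => by simp [sum_sub_distrib]).tsum_eq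
    fun m => ∏ p, lam p ^ (m.1 p).natAbs

/-- The main limit: (1/n)·∑_{i₁,…,i_k=1}^n ∏_p λ_p^{|i_p - i_{p+1} - s_p|} → B_S,
with indices cyclic and S = |s₁+⋯+s_k|. -/
theorem stmt6 (k : ℕ) (hk : 2 ≤ k) (lam : Fin k → ℝ)
    (hlam : ∀ i, |lam i| < 1) (s : Fin k → ℤ) :
    Tendsto (fun n : ℕ =>
        (1 / (n : ℝ)) *
          ∑ i ∈ Fintype.piFinset (fun _ : Fin k => Finset.Icc (1 : ℤ) n),
            ∏ p, lam p ^ (i p - i (finRotate k p) - s p).natAbs)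
      atTop
      (nhds (∑' m : {f : Fin k → ℤ // ∑ i, f i = |∑ i, s i|},
        ∏ i, lam i ^ ((m : Fin k → ℤ) i).natAbs)) := by
  obtain ⟨K, rfl⟩ : ∃ K, k = K + 1 := ⟨k - 1, by omega⟩
  have hF : Summable fun d : Fin (K + 1) → ℤ => ∏ p, lam p ^ (d p - s p).natAbs :=
    (summable_prod_pow_natAbs hlam).comp_injective (sub_left_injective (b := s))
  have h := tendsto_average_sum_comp_cyclicDiff hF
  rw [tsum_prod_pow_natAbs_sub_eq_levelSum, levelSum_neg, ← levelSum_abs] at h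
  exact h
end

section
/- Let λ₁,…,λ_k be real numbers with |λ_i| < 1 and s₁,…,s_k integers with S = s₁+⋯+s_k ≥ 0. Then for every n, (1/n)∑_{i₁,…,i_k=1}^n ∏_{p=1}^k λ_p^{|i_p - i_{p+1} - s_p|} ≤ ∑_{m₁+⋯+m_k=S} ∏_{p=1}^k |λ_p|^{|m_p|} (indices cyclic, i_{k+1}=i₁); that is, the finite average is bounded above by the infinite sum B_S with |λ|'s. -/
/-!
Put `m_p = i_{p+1} - i_p + s_p`. The cyclic sum of these increments telescopes to `S`, and the
term of index `i` is at most `∏ |λ_p|^{|m_p|}`. Two tuples `i` with the same increments differ by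
a rotation-invariant, hence constant, vector, so each `m` comes from at most `n` tuples in
`[1, n]^k` (one per value of `i₁`). Therefore the `n^k`-term sum is at most `n` times the sum
over all `m` with `∑ m_p = S`, which converges because `∏ |λ_p|^{|m_p|}` is a product of
summable two-sided geometric series.
-/

open Finset

lemma summable_pow_natAbs_s9 {r : ℝ} (h0 : 0 ≤ r) (h1 : r < 1) :
    Summable (fun m : ℤ => r ^ m.natAbs) :=
  .of_nat_of_neg (by simpa using summable_geometric_of_lt_one h0 h1)
    (by simpa using summable_geometric_of_lt_one h0 h1)

lemma summable_pi_prod_of_nonneg_s9 {ι κ : Type*} [Fintype ι] {g : ι → κ → ℝ}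
    (h0 : ∀ i m, 0 ≤ g i m) (hg : ∀ i, Summable (g i)) :
    Summable (fun x : ι → κ => ∏ i, g i (x i)) := by
  classical
  refine summable_of_sum_le (c := ∏ i, ∑' m, g i m)
    (fun x => prod_nonneg fun i _ => h0 i (x i)) fun T => ?_
  calc ∑ x ∈ T, ∏ i, g i (x i)
      ≤ ∑ x ∈ Fintype.piFinset (fun i => T.image (· i)), ∏ i, g i (x i) :=
        sum_le_sum_of_subset_of_nonneg
          (fun x hx => Fintype.mem_piFinset.2 fun i => mem_image_of_mem _ hx)
          fun x _ _ => prod_nonneg fun i _ => h0 i (x i)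
    _ = ∏ i, ∑ m ∈ T.image (· i), g i m := (prod_univ_sum _ _).symm
    _ ≤ ∏ i, ∑' m, g i m :=
        prod_le_prod (fun i _ => sum_nonneg fun m _ => h0 i m)
          fun i _ => (hg i).sum_le_tsum _ fun m _ => h0 i m

lemma sum_comp_le_mul_tsum {α β : Type*} [DecidableEq β] {A : Finset α} {f : α → β}
    {F : β → ℝ} {n : ℕ} (hF0 : ∀ b, 0 ≤ F b) (hF : Summable F)
    (hfiber : ∀ b, #{a ∈ A | f a = b} ≤ n) :
    ∑ a ∈ A, F (f a) ≤ n * ∑' b, F b := by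
  rw [sum_comp]
  calc ∑ b ∈ A.image f, #{a ∈ A | f a = b} • F b
      ≤ ∑ b ∈ A.image f, n * F b :=
        sum_le_sum fun b _ => by
          rw [nsmul_eq_mul]
          exact mul_le_mul_of_nonneg_right (by exact_mod_cast hfiber b) (hF0 b)
    _ = n * ∑ b ∈ A.image f, F b := (mul_sum _ _ _).symm
    _ ≤ n * ∑' b, F b := by
        gcongr
        exact hF.sum_le_tsum _ fun b _ => hF0 b

lemma eq_apply_zero_of_comp_finRotate_eq {α : Type*} {k : ℕ} {d : Fin (k + 1) → α}
    (h : ∀ p, d (finRotate _ p) = d p) (p : Fin (k + 1)) : d p = d 0 := by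
  induction p using Fin.induction with
  | zero => rfl
  | succ p ih => rw [← Fin.coeSucc_eq_succ, ← finRotate_apply, h, ih]

section CyclicIncrement

variable {k : ℕ}

def cyclicIncrement (s i : Fin k → ℤ) : Fin k → ℤ :=
  fun p => i (finRotate k p) - i p + s p

lemma sum_cyclicIncrement (s i : Fin k → ℤ) : ∑ p, cyclicIncrement s i p = ∑ p, s p := by
  simp only [cyclicIncrement, sum_add_distrib, sum_sub_distrib,
    Equiv.sum_comp (finRotate k) i, sub_self, zero_add]

lemma natAbs_cyclicIncrement (s i : Fin k → ℤ) (p : Fin k) :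
    (cyclicIncrement s i p).natAbs = (i p - i (finRotate k p) - s p).natAbs := by
  rw [← Int.natAbs_neg, cyclicIncrement]
  ring_nf

lemma eq_of_cyclicIncrement_eq {s i j : Fin (k + 1) → ℤ}
    (h : cyclicIncrement s i = cyclicIncrement s j) (h0 : i 0 = j 0) : i = j := by
  have hconst := eq_apply_zero_of_comp_finRotate_eq (d := i - j) fun p => by
    have := congrFun h p
    simp only [cyclicIncrement, Pi.sub_apply] at this ⊢
    linarith
  funext p
  have := hconst p
  simp only [Pi.sub_apply] at this
  linarith

lemma card_cyclicIncrement_fiber_le (s b : Fin (k + 1) → ℤ) (n : ℕ) :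
    #{i ∈ Fintype.piFinset (fun _ => Icc (1 : ℤ) n) | cyclicIncrement s i = b} ≤ n := by
  refine (card_le_card_of_injOn (fun i => i 0) (t := Icc (1 : ℤ) n) (fun i hi => ?_)
    fun i hi j hj h0 => ?_).trans_eq (by simp)
  · exact Fintype.mem_piFinset.1 (mem_filter.1 hi).1 0
  · exact eq_of_cyclicIncrement_eq ((mem_filter.1 hi).2.trans (mem_filter.1 hj).2.symm) h0

end CyclicIncrement

theorem stmt9_general (k : ℕ) (hk : 2 ≤ k) (lam : Fin k → ℝ)
    (hlam : ∀ i, |lam i| < 1) (s : Fin k → ℤ) :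
    ∀ n : ℕ,
      (1 / (n : ℝ)) *
          ∑ i ∈ Fintype.piFinset (fun _ : Fin k => Finset.Icc (1 : ℤ) n),
            ∏ p, lam p ^ (i p - i (finRotate k p) - s p).natAbs
        ≤ ∑' m : {f : Fin k → ℤ // ∑ i, f i = ∑ i, s i},
            ∏ p, |lam p| ^ ((m : Fin k → ℤ) p).natAbs := by
  intro n
  obtain ⟨k, rfl⟩ : ∃ k', k = k' + 1 := ⟨k - 1, by omega⟩
  have hF0 (m : {f : Fin (k + 1) → ℤ // ∑ i, f i = ∑ i, s i}) :
      0 ≤ ∏ p, |lam p| ^ ((m : Fin (k + 1) → ℤ) p).natAbs := by positivity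
  rcases n.eq_zero_or_pos with rfl | hn
  · simpa using tsum_nonneg hF0
  rw [one_div, inv_mul_le_iff₀ (by exact_mod_cast hn)]
  calc ∑ i ∈ Fintype.piFinset (fun _ => Icc (1 : ℤ) n),
        ∏ p, lam p ^ (i p - i (finRotate (k + 1) p) - s p).natAbs
      ≤ ∑ i ∈ Fintype.piFinset (fun _ => Icc (1 : ℤ) n),
          ∏ p, |lam p| ^ (cyclicIncrement s i p).natAbs :=
        sum_le_sum fun i _ => (le_abs_self _).trans_eq <| by
          simp only [abs_prod, abs_pow, natAbs_cyclicIncrement]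
    _ ≤ n * ∑' m : {f : Fin (k + 1) → ℤ // ∑ i, f i = ∑ i, s i},
          ∏ p, |lam p| ^ ((m : Fin (k + 1) → ℤ) p).natAbs :=
        sum_comp_le_mul_tsum (β := {f : Fin (k + 1) → ℤ // ∑ i, f i = ∑ i, s i})
          (f := fun i => ⟨cyclicIncrement s i, sum_cyclicIncrement s i⟩)
          (F := fun m => ∏ p, |lam p| ^ ((m : Fin (k + 1) → ℤ) p).natAbs) hF0
          ((summable_pi_prod_of_nonneg_s9 (fun _ _ => by positivity)
            fun p => summable_pow_natAbs_s9 (abs_nonneg _) (hlam p)).subtype _)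
          fun b => by
            simpa only [Subtype.ext_iff] using card_cyclicIncrement_fiber_le s b.1 n

/-- The finite cyclic average is bounded by the infinite sum with |λ|'s:
(1/n)∑_{i₁,…,i_k=1}^n ∏_p λ_p^{|i_p-i_{p+1}-s_p|} ≤ ∑_{m₁+⋯+m_k=S} ∏_p |λ_p|^{|m_p|}. -/
theorem stmt9 (k : ℕ) (hk : 2 ≤ k) (lam : Fin k → ℝ)
    (hlam : ∀ i, |lam i| < 1) (s : Fin k → ℤ) (hS : 0 ≤ ∑ i, s i) :
    ∀ n : ℕ,
      (1 / (n : ℝ)) *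
          ∑ i ∈ Fintype.piFinset (fun _ : Fin k => Finset.Icc (1 : ℤ) n),
            ∏ p, lam p ^ (i p - i (finRotate k p) - s p).natAbs
        ≤ ∑' m : {f : Fin k → ℤ // ∑ i, f i = ∑ i, s i},
            ∏ p, |lam p| ^ ((m : Fin k → ℤ) p).natAbs :=
  stmt9_general k hk lam hlam s
end

section
/- Let λ₁, λ₂ be distinct real numbers with 0 < |λ_i| < 1 and s₁, s₂ integers with S = |s₁+s₂|. Then lim_{n→∞} (1/n) ∑_{i,j=1}^n λ₁^{|i-j-s₁|} λ₂^{|j-i-s₂|} = λ₁^{S+1}(1-λ₂²)/((λ₁-λ₂)(1-λ₁λ₂)) + λ₂^{S+1}(1-λ₁²)/((λ₂-λ₁)(1-λ₁λ₂)). -/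
open Filter Finset Topology

/-!
With `g d = λ₁ ^ |d - s₁| * λ₂ ^ |d + s₂|` the double sum is `∑_{i,j ≤ n} g (i - j)`, and enlarging
the square from `n` to `n + 1` adds exactly the symmetric partial sum `∑_{|d| ≤ n} g d`. Hence the
averaged double sum is the Cesàro mean of the symmetric partial sums of `∑_{d ∈ ℤ} g d`, and tends
to that sum. After a shift, and a reflection when `s₁ + s₂ > 0`, the sum becomes
`∑_e λ₁ ^ |e| * λ₂ ^ |e - S|`: two geometric series in `λ₁ λ₂` (for `e < 0` and `e ≥ S`) plus the
finite geometric sum over `0 ≤ e < S`.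
-/

lemma sum_range_pow_mul_pow_sub_mul_sub {R : Type*} [CommRing R] (x y : R) (n : ℕ) :
    (∑ i ∈ range n, x ^ i * y ^ (n - i)) * (x - y) = (x ^ n - y ^ n) * y := by
  have hfactor : ∑ i ∈ range n, x ^ i * y ^ (n - i) =
      (∑ i ∈ range n, x ^ i * y ^ (n - 1 - i)) * y := by
    rw [sum_mul]
    refine sum_congr rfl fun i hi => ?_
    rw [mul_assoc, ← pow_succ]
    have := mem_range.mp hi
    congr 2
    omega
  rw [hfactor, mul_right_comm, geom_sum₂_mul]

section TwoSidedGeometric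

variable {𝕜 : Type*} [NormedField 𝕜] {a b : 𝕜}

lemma hasSum_pow_mul_pow_natAbs_sub (hab : ‖a * b‖ < 1) (S : ℕ) :
    HasSum (fun n : ℕ => a ^ n * b ^ ((n : ℤ) - S).natAbs)
      (a ^ S * (1 - a * b)⁻¹ + ∑ i ∈ range S, a ^ i * b ^ (S - i)) := by
  have hshift : HasSum (fun n : ℕ => a ^ (n + S) * b ^ (((n + S : ℕ) : ℤ) - S).natAbs)
      (a ^ S * (1 - a * b)⁻¹) := by
    refine ((hasSum_geometric_of_norm_lt_one hab).mul_left (a ^ S)).congr_fun fun n => ?_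
    simp only [Nat.cast_add, add_sub_cancel_right, Int.natAbs_natCast]
    ring
  have hhead : ∑ i ∈ range S, a ^ i * b ^ ((i : ℤ) - S).natAbs
      = ∑ i ∈ range S, a ^ i * b ^ (S - i) :=
    sum_congr rfl fun i hi => by rw [show ((i : ℤ) - S).natAbs = S - i by have := mem_range.mp hi; omega]
  rw [← hhead]
  exact (hasSum_nat_add_iff (f := fun n : ℕ => a ^ n * b ^ ((n : ℤ) - S).natAbs) S).mp hshift

lemma hasSum_pow_natAbs_neg_mul_pow_natAbs_sub (hab : ‖a * b‖ < 1) (S : ℕ) :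
    HasSum (fun n : ℕ => a ^ (-((n : ℤ) + 1)).natAbs * b ^ (-((n : ℤ) + 1) - S).natAbs)
      (a * b ^ (S + 1) * (1 - a * b)⁻¹) := by
  refine ((hasSum_geometric_of_norm_lt_one hab).mul_left (a * b ^ (S + 1))).congr_fun fun n => ?_
  rw [show (-((n : ℤ) + 1)).natAbs = n + 1 by omega,
    show (-((n : ℤ) + 1) - S).natAbs = n + (S + 1) by omega]
  ring

lemma hasSum_pow_natAbs_mul_pow_natAbs_sub_s12 (hab : ‖a * b‖ < 1) (hne : a ≠ b) (S : ℕ) :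
    HasSum (fun e : ℤ => a ^ e.natAbs * b ^ (e - S).natAbs)
      (a ^ (S + 1) * (1 - b ^ 2) / ((a - b) * (1 - a * b))
        + b ^ (S + 1) * (1 - a ^ 2) / ((b - a) * (1 - a * b))) := by
  have hden : 1 - a * b ≠ 0 := sub_ne_zero.mpr fun h => by simp [← h] at hab
  have hsub : a - b ≠ 0 := sub_ne_zero.mpr hne
  have hfin := eq_div_of_mul_eq hsub (sum_range_pow_mul_pow_sub_mul_sub a b S)
  convert HasSum.of_nat_of_neg_add_one (f := fun e : ℤ => a ^ e.natAbs * b ^ (e - S).natAbs)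
    (hasSum_pow_mul_pow_natAbs_sub hab S) (hasSum_pow_natAbs_neg_mul_pow_natAbs_sub hab S) using 1
  rw [hfin, pow_succ, pow_succ]
  field_simp
  ring

lemma hasSum_pow_natAbs_sub_mul_pow_natAbs_add (hab : ‖a * b‖ < 1) (hne : a ≠ b) (s t : ℤ) :
    HasSum (fun d : ℤ => a ^ (d - s).natAbs * b ^ (d + t).natAbs)
      (a ^ ((s + t).natAbs + 1) * (1 - b ^ 2) / ((a - b) * (1 - a * b))
        + b ^ ((s + t).natAbs + 1) * (1 - a ^ 2) / ((b - a) * (1 - a * b))) := by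
  have key := hasSum_pow_natAbs_mul_pow_natAbs_sub_s12 hab hne (s + t).natAbs
  rcases le_or_gt (s + t) 0 with hst | hst
  · refine (Equiv.addRight s).hasSum_iff.mp (key.congr_fun fun e => ?_)
    simp only [Function.comp_apply, Equiv.coe_addRight, add_sub_cancel_right]
    congr 2
    omega
  · refine (Equiv.subLeft s).hasSum_iff.mp (key.congr_fun fun e => ?_)
    simp only [Function.comp_apply, Equiv.subLeft_apply]
    congr 2 <;> omega

end TwoSidedGeometric

section ToeplitzSum

variable {M : Type*} [AddCommMonoid M] (g : ℤ → M)

lemma sum_Icc_sum_Icc_sub_add_one (n : ℕ) :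
    ∑ i ∈ Icc (1 : ℤ) (n + 1), ∑ j ∈ Icc (1 : ℤ) (n + 1), g (i - j)
      = ∑ i ∈ Icc (1 : ℤ) n, ∑ j ∈ Icc (1 : ℤ) n, g (i - j) + ∑ d ∈ Icc (-(n : ℤ)) n, g d := by
  have hnotMem : (n + 1 : ℤ) ∉ Icc (1 : ℤ) n := by simp
  have hrow : ∑ j ∈ Icc (1 : ℤ) n, g (n + 1 - j) = ∑ d ∈ Icc (1 : ℤ) n, g d :=
    sum_nbij' (fun j => n + 1 - j) (fun d => n + 1 - d) (fun _ => by simp only [mem_Icc]; omega)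
      (fun _ => by simp only [mem_Icc]; omega) (by simp) (by simp) (by simp)
  have hcol : ∑ i ∈ Icc (1 : ℤ) n, g (i - (n + 1)) = ∑ d ∈ Icc (-(n : ℤ)) (-1), g d :=
    sum_nbij' (fun i => i - (n + 1)) (fun d => d + (n + 1)) (fun _ => by simp only [mem_Icc]; omega)
      (fun _ => by simp only [mem_Icc]; omega) (by simp) (by simp) (by simp)
  have hsplit : Icc (-(n : ℤ)) n = Icc (-(n : ℤ)) (-1) ∪ insert 0 (Icc 1 n) := by
    ext; simp only [mem_Icc, mem_union, mem_insert]; omega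
  rw [← insert_Icc_right_eq_Icc_add_one (by omega), sum_insert hnotMem,
    sum_insert hnotMem, sub_self]
  simp only [sum_insert hnotMem, sum_add_distrib]
  have hdisj : Disjoint (Icc (-(n : ℤ)) (-1)) (insert 0 (Icc 1 n)) :=
    disjoint_left.mpr fun _ => by simp only [mem_Icc, mem_insert]; omega
  rw [hrow, hcol, hsplit, sum_union hdisj, sum_insert (by simp)]
  abel

lemma sum_Icc_sum_Icc_sub_eq_sum_range (n : ℕ) :
    ∑ i ∈ Icc (1 : ℤ) n, ∑ j ∈ Icc (1 : ℤ) n, g (i - j)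
      = ∑ k ∈ range n, ∑ d ∈ Icc (-(k : ℤ)) k, g d := by
  induction n with
  | zero => simp
  | succ n ih => rw [sum_range_succ, ← ih, Nat.cast_succ, sum_Icc_sum_Icc_sub_add_one]

end ToeplitzSum

lemma HasSum.tendsto_inv_smul_sum_Icc_sum_Icc_sub {E : Type*} [NormedAddCommGroup E]
    [NormedSpace ℝ E] {g : ℤ → E} {T : E} (hg : HasSum g T) :
    Tendsto (fun n : ℕ => (n : ℝ)⁻¹ • ∑ i ∈ Icc (1 : ℤ) n, ∑ j ∈ Icc (1 : ℤ) n, g (i - j))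
      atTop (𝓝 T) := by
  have hsym : Tendsto (fun k : ℕ => ∑ d ∈ Icc (-(k : ℤ)) k, g d) atTop (𝓝 T) :=
    SummationFilter.hasSum_symmetricIcc_iff.mp (hg.mono_left SummationFilter.le_atTop)
  simpa only [sum_Icc_sum_Icc_sub_eq_sum_range] using hsym.cesaro_smul

theorem stmt12_general (lam1 lam2 : ℝ) (h1 : |lam1| < 1) (h2 : |lam2| < 1)
    (hne : lam1 ≠ lam2) (s1 s2 : ℤ) :
    Tendsto (fun n : ℕ =>
        (1 / (n : ℝ)) *
          ∑ i ∈ Finset.Icc (1 : ℤ) n, ∑ j ∈ Finset.Icc (1 : ℤ) n,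
            lam1 ^ (i - j - s1).natAbs * lam2 ^ (j - i - s2).natAbs)
      atTop
      (nhds (lam1 ^ ((s1 + s2).natAbs + 1) * (1 - lam2 ^ 2)
              / ((lam1 - lam2) * (1 - lam1 * lam2))
            + lam2 ^ ((s1 + s2).natAbs + 1) * (1 - lam1 ^ 2)
              / ((lam2 - lam1) * (1 - lam1 * lam2)))) := by
  have hprod : ‖lam1 * lam2‖ < 1 := by
    rw [norm_mul]
    exact mul_lt_one_of_nonneg_of_lt_one_left (norm_nonneg _) h1 h2.le
  refine (hasSum_pow_natAbs_sub_mul_pow_natAbs_add hprod hne s1 s2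
    |>.tendsto_inv_smul_sum_Icc_sum_Icc_sub).congr fun n => ?_
  rw [one_div, smul_eq_mul]
  congr 1
  refine sum_congr rfl fun i _ => sum_congr rfl fun j _ => ?_
  rw [show (j - i - s2).natAbs = (i - j + s2).natAbs by omega]

/-- k = 2 case of the main theorem:
lim (1/n) ∑_{i,j=1}^n λ₁^{|i-j-s₁|} λ₂^{|j-i-s₂|}
  = λ₁^{S+1}(1-λ₂²)/((λ₁-λ₂)(1-λ₁λ₂)) + λ₂^{S+1}(1-λ₁²)/((λ₂-λ₁)(1-λ₁λ₂)). -/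
theorem stmt12 (lam1 lam2 : ℝ) (h1 : |lam1| < 1) (h2 : |lam2| < 1)
    (h1' : lam1 ≠ 0) (h2' : lam2 ≠ 0) (hne : lam1 ≠ lam2) (s1 s2 : ℤ) :
    Tendsto (fun n : ℕ =>
        (1 / (n : ℝ)) *
          ∑ i ∈ Finset.Icc (1 : ℤ) n, ∑ j ∈ Finset.Icc (1 : ℤ) n,
            lam1 ^ (i - j - s1).natAbs * lam2 ^ (j - i - s2).natAbs)
      atTop
      (nhds (lam1 ^ ((s1 + s2).natAbs + 1) * (1 - lam2 ^ 2)
              / ((lam1 - lam2) * (1 - lam1 * lam2))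
            + lam2 ^ ((s1 + s2).natAbs + 1) * (1 - lam1 ^ 2)
              / ((lam2 - lam1) * (1 - lam1 * lam2)))) :=
  stmt12_general lam1 lam2 h1 h2 hne s1 s2
end
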